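/- Let E be a graded Fréchet algebra over ℂ with unit 1 and seminorm family (‖·‖_p)_{p∈ℕ}, and let ℓ¹(E) := { v : ℕ → E : for every p, ∑_j ‖v_j‖_p < ∞ } with seminorms ‖v‖_p := ∑_j ‖v_j‖_p. Let a : ℕ → ℕ → E be an infinite matrix and A : ℓ¹(E) → ℓ¹(E) a continuous linear map such that for every v ∈ ℓ¹(E) and every i, the series ∑_j a_{i,j}·v_j converges in E to (A v)_i. Suppose: (i) there is a strictly increasing sequence (n_m)_{m∈ℕ} of natural numbers with n_0 = 0 and n_m → ∞, such that a_{i,j} = 0 whenever i > n_m, where m = m(j) is the unique index with n_{m−1} < j ≤ n_m; (ii) there are reals 0 ≤ θ_p < 1 with ∑_i ‖v_i − (A v)_i‖_p ≤ θ_p·∑_i ‖v_i‖_p for all p and all v ∈ ℓ¹(E). Then A is bijective on ℓ¹(E), and its inverse satisfies the same vanishing pattern: for every j, writing e_j ∈ ℓ¹(E) for the sequence with the unit 1 of E in position j and 0 elsewhere, one has (A⁻¹ e_j)_i = 0 whenever i > n_{m(j)}. -/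

import Mathlib

section Aux

variable {E : Type*} [Ring E] [Algebra ℂ E]
    [UniformSpace E] [IsUniformAddGroup E] [CompleteSpace E] [T2Space E] [IsTopologicalRing E]
    {q : SeminormFamily ℂ E ℕ}

set_option linter.unusedSectionVars false

lemma aux_qsum {ι : Type*} (p : Seminorm ℂ E) (f : ι → E) (s : Finset ι) :
    p (∑ i ∈ s, f i) ≤ ∑ i ∈ s, p (f i) := by
  classical
  induction s using Finset.induction_on with
  | empty => simp
  | @insert a s h ih =>
    rw [Finset.sum_insert h, Finset.sum_insert h]
    exact (map_add_le_add p _ _).trans (by linarith)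

lemma aux_sep (hq : WithSeminorms q) (x : E) (h : ∀ p, q p x = 0) : x = 0 := by
  by_contra hx
  obtain ⟨i, hi⟩ := hq.separating_of_T1 x hx
  exact hi (h i)

/-- summability in `E` from summability of all seminorms. -/
lemma aux_summable {ι : Type*} (hq : WithSeminorms q) (hqmono : Monotone q)
    (x : ι → E) (h : ∀ p, Summable fun k => q p (x k)) : Summable x := by
  classical
  rw [summable_iff_vanishing]
  intro e he
  obtain ⟨⟨s, r⟩, hr, hball⟩ := hq.hasBasis_zero_ball.mem_iff.mp he
  simp only at hr hball
  set M : ℕ := s.sup id with hM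
  have hsup : s.sup q ≤ q M := Finset.sup_le fun p hp => hqmono (Finset.le_sup (f := id) hp)
  obtain ⟨s₀, hs₀⟩ := (summable_iff_vanishing.mp (h M)) (Set.Iio r) (Iio_mem_nhds hr)
  refine ⟨s₀, fun t ht => hball ?_⟩
  rw [Seminorm.mem_ball_zero]
  calc (s.sup q) (∑ k ∈ t, x k) ≤ q M (∑ k ∈ t, x k) := hsup _
    _ ≤ ∑ k ∈ t, q M (x k) := aux_qsum _ _ _
    _ < r := by simpa using hs₀ t ht

/-- seminorm of a tsum. -/
lemma aux_qtsum {ι : Type*} (hq : WithSeminorms q) (p : ℕ) (x : ι → E)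
    (hx : Summable x) (hqx : Summable fun k => q p (x k)) :
    q p (∑' k, x k) ≤ ∑' k, q p (x k) := by
  refine le_of_tendsto (((hq.continuous_seminorm p).tendsto _).comp hx.hasSum) ?_
  filter_upwards with s
  exact (aux_qsum (q p) x s).trans (Summable.sum_le_tsum s (fun i _ => apply_nonneg _ _) hqx)

end Aux

theorem stmt9 {E : Type*} [Ring E] [Algebra ℂ E]
    [UniformSpace E] [IsUniformAddGroup E] [CompleteSpace E] [T2Space E] [IsTopologicalRing E]
    (q : SeminormFamily ℂ E ℕ) (hq : WithSeminorms q) (hqmono : Monotone q)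
    (L1 : Set (ℕ+ → E))
    (hL1 : L1 = {v : ℕ+ → E | ∀ p, Summable fun j => q p (v j)})
    (A : (ℕ+ → E) →ₗ[ℂ] (ℕ+ → E))
    (hAmaps : ∀ v ∈ L1, A v ∈ L1)
    (hAcont : ∀ p : ℕ, ∃ (p' : ℕ) (C : ℝ), 0 ≤ C ∧ ∀ v ∈ L1,
      (∑' i, q p (A v i)) ≤ C * ∑' i, q p' (v i))
    (a : ℕ+ → ℕ+ → E)
    (hentries : ∀ v ∈ L1, ∀ i, HasSum (fun j => a i j * v j) (A v i))
    (n : ℕ → ℕ) (hn0 : n 0 = 0) (hnmono : StrictMono n)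
    (hvanish : ∀ m : ℕ, 1 ≤ m → ∀ j : ℕ+, n (m - 1) < (j : ℕ) → (j : ℕ) ≤ n m →
      ∀ i : ℕ+, n m < (i : ℕ) → a i j = 0)
    (θ : ℕ → ℝ) (hθ0 : ∀ p, 0 ≤ θ p) (hθ1 : ∀ p, θ p < 1)
    (hcontract : ∀ p : ℕ, ∀ v ∈ L1,
      (∑' i, q p (v i - A v i)) ≤ θ p * ∑' i, q p (v i)) :
    Set.BijOn A L1 L1 ∧
      ∀ m : ℕ, 1 ≤ m → ∀ j : ℕ+, n (m - 1) < (j : ℕ) → (j : ℕ) ≤ n m →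
        ∀ w ∈ L1, A w = Pi.single j (1 : E) →
          ∀ i : ℕ+, n m < (i : ℕ) → w i = 0 := by
  classical
  have hmem : ∀ v : ℕ+ → E, v ∈ L1 ↔ ∀ p, Summable fun j => q p (v j) := by
    intro v; rw [hL1]; exact Iff.rfl
  -- closure properties
  have hsubL1 : ∀ {v w : ℕ+ → E}, v ∈ L1 → w ∈ L1 → v - w ∈ L1 := by
    intro v w hv hw
    rw [hmem] at hv hw ⊢
    intro p
    exact ((hv p).add (hw p)).of_nonneg_of_le (fun i => apply_nonneg _ _)
      (fun i => map_sub_le_add (q p) (v i) (w i))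
  have haddL1 : ∀ {v w : ℕ+ → E}, v ∈ L1 → w ∈ L1 → v + w ∈ L1 := by
    intro v w hv hw
    rw [hmem] at hv hw ⊢
    intro p
    exact ((hv p).add (hw p)).of_nonneg_of_le (fun i => apply_nonneg _ _)
      (fun i => map_add_le_add (q p) (v i) (w i))
  have hzeroL1 : (0 : ℕ+ → E) ∈ L1 := by
    rw [hmem]; intro p; simpa using (summable_zero : Summable fun _ : ℕ+ => (0:ℝ))
  -- zero from contraction
  have hzero : ∀ v ∈ L1, (∀ p, (∑' i, q p (v i)) ≤ θ p * ∑' i, q p (v i)) → v = 0 := by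
    intro v hv hc
    funext i
    show v i = 0
    apply aux_sep hq
    intro p
    have hs := (hmem v).mp hv p
    have hnn : (0:ℝ) ≤ ∑' i, q p (v i) := tsum_nonneg fun i => apply_nonneg _ _
    have h0 : (∑' i, q p (v i)) = 0 := by
      by_contra hne
      have hpos : 0 < ∑' i, q p (v i) := lt_of_le_of_ne hnn (Ne.symm hne)
      nlinarith [hc p, hθ1 p]
    have h1 := Summable.le_tsum hs i (fun j _ => apply_nonneg _ _)
    rw [h0] at h1
    exact le_antisymm h1 (apply_nonneg _ _)
  -- injectivity
  have hinj : Set.InjOn A L1 := by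
    intro v hv w hw hvw
    have hd : v - w ∈ L1 := hsubL1 hv hw
    have hc : ∀ p, (∑' i, q p ((v - w) i)) ≤ θ p * ∑' i, q p ((v - w) i) := by
      intro p
      have hz : A (v - w) = 0 := by rw [map_sub, hvw, sub_self]
      have := hcontract p (v - w) hd
      simpa [hz] using this
    exact sub_eq_zero.mp (hzero (v - w) hd hc)
  -- geometric helper
  have hgeo : ∀ p (c : ℝ), Summable fun k : ℕ => θ p ^ k * c :=
    fun p c => (summable_geometric_of_lt_one (hθ0 p) (hθ1 p)).mul_right c
  -- surjectivity
  have hsurj : ∀ y ∈ L1, ∃ v ∈ L1, A v = y := by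
    intro y hy
    set S : ℕ → ℝ := fun p => ∑' i, q p (y i) with hS
    set vk : ℕ → ℕ+ → E := fun k => (fun v => v - A v)^[k] y with hvkdef
    have hvk0 : vk 0 = y := rfl
    have hvk_succ : ∀ k, vk (k + 1) = vk k - A (vk k) := fun k =>
      Function.iterate_succ_apply' _ k y
    have hvkL1 : ∀ k, vk k ∈ L1 := by
      intro k
      induction k with
      | zero => exact hy
      | succ k ih => rw [hvk_succ]; exact hsubL1 ih (hAmaps _ ih)
    have hvkb : ∀ p k, (∑' i, q p (vk k i)) ≤ θ p ^ k * S p := by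
      intro p k
      induction k with
      | zero => simp [hvk0, hS]
      | succ k ih =>
        have h1 : (∑' i, q p (vk (k+1) i)) ≤ θ p * ∑' i, q p (vk k i) := by
          have := hcontract p (vk k) (hvkL1 k)
          rw [hvk_succ]
          simpa using this
        calc (∑' i, q p (vk (k+1) i)) ≤ θ p * ∑' i, q p (vk k i) := h1
          _ ≤ θ p * (θ p ^ k * S p) := mul_le_mul_of_nonneg_left ih (hθ0 p)
          _ = θ p ^ (k+1) * S p := by ring
    have hvk_single : ∀ p k i, q p (vk k i) ≤ θ p ^ k * S p := fun p k i =>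
      (Summable.le_tsum ((hmem _).mp (hvkL1 k) p) i (fun j _ => apply_nonneg _ _)).trans (hvkb p k)
    have hqvk : ∀ p i, Summable fun k => q p (vk k i) := fun p i =>
      (hgeo p (S p)).of_nonneg_of_le (fun k => apply_nonneg _ _) (fun k => hvk_single p k i)
    have hxsum : ∀ i, Summable fun k => vk k i := fun i =>
      aux_summable hq hqmono _ (fun p => hqvk p i)
    set v : ℕ+ → E := fun i => ∑' k, vk k i with hvdef
    have hqv : ∀ p i, q p (v i) ≤ ∑' k, q p (vk k i) := fun p i =>
      aux_qtsum hq p _ (hxsum i) (hqvk p i)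
    have hGsum : ∀ p, (∑' k : ℕ, θ p ^ k * S p) = (1 - θ p)⁻¹ * S p := by
      intro p
      rw [tsum_mul_right, tsum_geometric_of_lt_one (hθ0 p) (hθ1 p)]
    have hvL1 : v ∈ L1 := by
      rw [hmem]
      intro p
      refine summable_of_sum_le (c := (1 - θ p)⁻¹ * S p) (fun i => apply_nonneg _ _) ?_
      intro u
      have h1 : (∑ i ∈ u, q p (v i)) ≤ ∑ i ∈ u, ∑' k, q p (vk k i) :=
        Finset.sum_le_sum fun i _ => hqv p i
      have h2 : (∑ i ∈ u, ∑' k, q p (vk k i)) = ∑' k, ∑ i ∈ u, q p (vk k i) :=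
        (Summable.tsum_finsetSum (f := fun (i : ℕ+) (k : ℕ) => q p (vk k i)) (fun i _ => hqvk p i)).symm
      have h3 : ∀ k, (∑ i ∈ u, q p (vk k i)) ≤ θ p ^ k * S p := fun k =>
        (Summable.sum_le_tsum u (fun i _ => apply_nonneg _ _) ((hmem _).mp (hvkL1 k) p)).trans (hvkb p k)
      have hsums : Summable fun k => ∑ i ∈ u, q p (vk k i) :=
        (hgeo p (S p)).of_nonneg_of_le
          (fun k => Finset.sum_nonneg fun i _ => apply_nonneg _ _) h3
      calc (∑ i ∈ u, q p (v i)) ≤ ∑' k, ∑ i ∈ u, q p (vk k i) := h2 ▸ h1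
        _ ≤ ∑' k : ℕ, θ p ^ k * S p := Summable.tsum_le_tsum h3 hsums (hgeo p (S p))
        _ = (1 - θ p)⁻¹ * S p := hGsum p
    -- partial sums
    set vN : ℕ → ℕ+ → E := fun N => ∑ k ∈ Finset.range N, vk k with hvNdef
    have hvN0 : vN 0 = 0 := by simp [hvNdef]
    have hvNsucc : ∀ N, vN (N+1) = vN N + vk N := by
      intro N; simp [hvNdef, Finset.sum_range_succ]
    have hvNL1 : ∀ N, vN N ∈ L1 := by
      intro N
      induction N with
      | zero => rw [hvN0]; exact hzeroL1
      | succ N ih => rw [hvNsucc]; exact haddL1 ih (hvkL1 N)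
    have hAvN : ∀ N, A (vN N) = y - vk N := by
      intro N
      induction N with
      | zero => rw [hvN0, map_zero, hvk0, sub_self]
      | succ N ih =>
        rw [hvNsucc, map_add, ih, hvk_succ]
        abel
    have hdN : ∀ N, v - vN N ∈ L1 := fun N => hsubL1 hvL1 (hvNL1 N)
    have hshiftx : ∀ (N : ℕ) (i : ℕ+), Summable fun k => vk (k + N) i := fun N i =>
      (summable_nat_add_iff N).mpr (hxsum i)
    have hshift : ∀ p (N : ℕ) (i : ℕ+), Summable fun k => q p (vk (k + N) i) := fun p N i =>
      (summable_nat_add_iff (f := fun k => q p (vk k i)) N).mpr (hqvk p i)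
    have hdiff : ∀ (N : ℕ) (i : ℕ+), (v - vN N) i = ∑' k, vk (k + N) i := by
      intro N i
      have h := Summable.sum_add_tsum_nat_add (f := fun k => vk k i) N (hxsum i)
      have h2 : vN N i = ∑ k ∈ Finset.range N, vk k i := by simp [hvNdef]
      show v i - vN N i = _
      rw [h2, sub_eq_iff_eq_add']
      exact h.symm
    have htail : ∀ p N, (∑' i, q p ((v - vN N) i)) ≤ θ p ^ N * ((1 - θ p)⁻¹ * S p) := by
      intro p N
      refine Summable.tsum_le_of_sum_le ((hmem _).mp (hdN N) p) ?_
      intro u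
      have h1 : ∀ i ∈ u, q p ((v - vN N) i) ≤ ∑' k, q p (vk (k + N) i) := by
        intro i _
        rw [hdiff N i]
        exact aux_qtsum hq p _ (hshiftx N i) (hshift p N i)
      have h2 : (∑ i ∈ u, ∑' k, q p (vk (k + N) i)) = ∑' k, ∑ i ∈ u, q p (vk (k + N) i) :=
        (Summable.tsum_finsetSum (f := fun (i : ℕ+) (k : ℕ) => q p (vk (k + N) i))
          (fun i _ => hshift p N i)).symm
      have h3 : ∀ k, (∑ i ∈ u, q p (vk (k + N) i)) ≤ θ p ^ (k + N) * S p := fun k =>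
        (Summable.sum_le_tsum u (fun i _ => apply_nonneg _ _)
          ((hmem _).mp (hvkL1 (k + N)) p)).trans (hvkb p (k + N))
      have h4 : ∀ k : ℕ, θ p ^ (k + N) * S p = θ p ^ N * (θ p ^ k * S p) := by
        intro k; ring
      have hsumg : Summable fun k : ℕ => θ p ^ (k + N) * S p := by
        simp_rw [h4]
        exact (hgeo p (S p)).mul_left (θ p ^ N)
      have hsums : Summable fun k => ∑ i ∈ u, q p (vk (k + N) i) :=
        hsumg.of_nonneg_of_le (fun k => Finset.sum_nonneg fun i _ => apply_nonneg _ _) h3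
      have h5 : (∑' k : ℕ, θ p ^ (k + N) * S p) = θ p ^ N * ((1 - θ p)⁻¹ * S p) := by
        simp_rw [h4]
        rw [tsum_mul_left, hGsum p]
      calc (∑ i ∈ u, q p ((v - vN N) i)) ≤ ∑ i ∈ u, ∑' k, q p (vk (k + N) i) :=
            Finset.sum_le_sum h1
        _ = ∑' k, ∑ i ∈ u, q p (vk (k + N) i) := h2
        _ ≤ ∑' k : ℕ, θ p ^ (k + N) * S p := Summable.tsum_le_tsum h3 hsums hsumg
        _ = θ p ^ N * ((1 - θ p)⁻¹ * S p) := h5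
    have hAv : A v = y := by
      funext i
      have hz : ∀ p, q p (A v i - y i) = 0 := by
        intro p
        obtain ⟨p', C, hC, hAC⟩ := hAcont p
        have hb : ∀ N, q p (A v i - y i) ≤
            C * (θ p' ^ N * ((1 - θ p')⁻¹ * S p')) + θ p ^ N * S p := by
          intro N
          have e1 : A v i - y i = (A v i - A (vN N) i) + (A (vN N) i - y i) := by abel
          have h1 : q p (A v i - y i) ≤ q p (A v i - A (vN N) i) + q p (A (vN N) i - y i) := by
            rw [e1]; exact map_add_le_add _ _ _
          have h2 : q p (A (vN N) i - y i) ≤ θ p ^ N * S p := by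
            have e2 : A (vN N) i - y i = -(vk N i) := by
              rw [hAvN N]; show y i - vk N i - y i = _; abel
            rw [e2, map_neg_eq_map]
            exact hvk_single p N i
          have e3 : A v i - A (vN N) i = A (v - vN N) i := by rw [map_sub]; rfl
          have h3 : q p (A v i - A (vN N) i) ≤ C * (θ p' ^ N * ((1 - θ p')⁻¹ * S p')) := by
            rw [e3]
            calc q p (A (v - vN N) i)
                ≤ ∑' i', q p (A (v - vN N) i') :=
                  Summable.le_tsum ((hmem _).mp (hAmaps _ (hdN N)) p) i (fun j _ => apply_nonneg _ _)
              _ ≤ C * ∑' i', q p' ((v - vN N) i') := hAC _ (hdN N)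
              _ ≤ C * (θ p' ^ N * ((1 - θ p')⁻¹ * S p')) :=
                  mul_le_mul_of_nonneg_left (htail p' N) hC
          linarith
        have h0 : Filter.Tendsto
            (fun N => C * (θ p' ^ N * ((1 - θ p')⁻¹ * S p')) + θ p ^ N * S p)
            Filter.atTop (nhds 0) := by
          have t1 := ((tendsto_pow_atTop_nhds_zero_of_lt_one (hθ0 p') (hθ1 p')).mul_const
            ((1 - θ p')⁻¹ * S p')).const_mul C
          have t2 := (tendsto_pow_atTop_nhds_zero_of_lt_one (hθ0 p) (hθ1 p)).mul_const (S p)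
          have := t1.add t2
          simpa using this
        exact le_antisymm (ge_of_tendsto' h0 hb) (apply_nonneg _ _)
      exact sub_eq_zero.mp (aux_sep hq _ hz)
    exact ⟨v, hvL1, hAv⟩
  -- block vanishing of the matrix
  have hkey : ∀ (m : ℕ) (j i : ℕ+), (j : ℕ) ≤ n m → n m < (i : ℕ) → a i j = 0 := by
    intro m j i hj hi
    have hex : ∃ m', (j : ℕ) ≤ n m' := ⟨m, hj⟩
    have hm'le : (j : ℕ) ≤ n (Nat.find hex) := Nat.find_spec hex
    set m' := Nat.find hex with hm'def
    have hm'pos : 1 ≤ m' := by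
      rcases Nat.eq_zero_or_pos m' with h | h
      · exfalso
        rw [h, hn0] at hm'le
        have := j.pos
        omega
      · exact h
    have hlt : n (m' - 1) < (j : ℕ) := by
      by_contra hcon
      push_neg at hcon
      exact Nat.find_min hex (Nat.sub_lt hm'pos Nat.one_pos) hcon
    have hm'm : m' ≤ m := by
      by_contra hcon
      push_neg at hcon
      have h1 : m ≤ m' - 1 := Nat.le_sub_one_of_lt hcon
      have h2 := hnmono.monotone h1
      omega
    exact hvanish m' hm'pos j hlt hm'le i (lt_of_le_of_lt (hnmono.monotone hm'm) hi)
  refine ⟨⟨fun v hv => hAmaps v hv, hinj, fun y hy => ?_⟩, ?_⟩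
  · obtain ⟨v, hv, hAv⟩ := hsurj y hy
    exact ⟨v, hv, hAv⟩
  · intro m hm j hj1 hj2 w hw hAw i0 hi0
    set u : ℕ+ → E := fun i => if n m < (i : ℕ) then w i else 0 with hudef
    have huL1 : u ∈ L1 := by
      rw [hmem]
      intro p
      refine ((hmem w).mp hw p).of_nonneg_of_le (fun i => apply_nonneg _ _) ?_
      intro i
      by_cases h : n m < (i : ℕ)
      · simp [hudef, h]
      · simp [hudef, h, apply_nonneg]
    have hAu0 : ∀ i : ℕ+, n m < (i : ℕ) → A u i = 0 := by
      intro i hi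
      have h1 := hentries u huL1 i
      have h2 := hentries w hw i
      have heq : (fun j' => a i j' * u j') = fun j' => a i j' * w j' := by
        funext j'
        by_cases h : n m < (j' : ℕ)
        · simp [hudef, h]
        · push_neg at h
          rw [hkey m j' i h hi, zero_mul, zero_mul]
      rw [heq] at h1
      rw [h1.unique h2, hAw]
      have hne : i ≠ j := by
        intro e
        rw [e] at hi
        omega
      exact Pi.single_eq_of_ne hne 1
    have hcond : ∀ p, (∑' i, q p (u i)) ≤ θ p * ∑' i, q p (u i) := by
      intro p
      have hpt : ∀ i, q p (u i) ≤ q p (u i - A u i) := by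
        intro i
        by_cases h : n m < (i : ℕ)
        · rw [hAu0 i h, sub_zero]
        · simp [hudef, h, apply_nonneg]
      have hs1 := (hmem u).mp huL1 p
      have hs2 : Summable fun i => q p (u i - A u i) :=
        (hmem _).mp (hsubL1 huL1 (hAmaps u huL1)) p
      calc (∑' i, q p (u i)) ≤ ∑' i, q p (u i - A u i) := Summable.tsum_le_tsum hpt hs1 hs2
        _ ≤ θ p * ∑' i, q p (u i) := hcontract p u huL1
    have hu0 := hzero u huL1 hcond
    have h := congrFun hu0 i0
    simpa [hudef, hi0] using h
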